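/- arXiv:2209.12037 — 3 statements merged into one kernel-verified Lean document; each statement's English description precedes it below -/
import Mathlib

section
/- Let m ≥ 1, ψ ∈ L²(ℝ^m, ℂ), f ∈ L²(ℝ^m, ℂ), and let T ⊆ ℝ^m and Ω ⊆ (0,∞)×ℝ^m be measurable sets. Then ‖1_Ω · T_ψ(1_T·f)‖²_{L²(μ)} ≤ ‖1_T·f‖²_{L²(ℝ^m)} · φ_{Ω,T}(ψ), where φ_{Ω,T}(ψ) = ∫_Ω (∫_{(T−b)/a} |ψ(t)|² dt) dμ(a,b). -/
open MeasureTheory Set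
open scoped ENNReal

/-- The continuous wavelet transform of `f` with respect to the wavelet `ψ`:
`T_ψ f (a, b) = a^(-m/2) ∫ f x * conj (ψ ((x - b) / a)) dx`. -/
noncomputable def waveletTransform (m : ℕ) (ψ f : EuclideanSpace ℝ (Fin m) → ℂ)
    (p : ℝ × EuclideanSpace ℝ (Fin m)) : ℂ :=
  ((p.1 ^ (-(m : ℝ) / 2) : ℝ) : ℂ) *
    ∫ x, f x * (starRingEnd ℂ) (ψ (p.1⁻¹ • (x - p.2)))

/-- The measure `dμ(a,b) = a^{-(m+1)} da db` on `(0,∞) × ℝ^m`, realized as a measure on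
`ℝ × ℝ^m` supported on `(0,∞) × ℝ^m`. -/
noncomputable def waveletMeasure (m : ℕ) : Measure (ℝ × EuclideanSpace ℝ (Fin m)) :=
  (((volume : Measure ℝ).restrict (Set.Ioi 0)).withDensity
    (fun a => ENNReal.ofReal (a ^ (-((m : ℝ) + 1))))).prod volume

/-- `φ_{Ω,T}(ψ) = ∫_Ω (∫_{(T-b)/a} |ψ t|² dt) dμ(a,b)`. -/
noncomputable def phiOmegaT (m : ℕ) (ψ : EuclideanSpace ℝ (Fin m) → ℂ)
    (Ω : Set (ℝ × EuclideanSpace ℝ (Fin m))) (T : Set (EuclideanSpace ℝ (Fin m))) : ℝ≥0∞ :=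
  ∫⁻ p in Ω, (∫⁻ t in (fun x => p.1⁻¹ • (x - p.2)) '' T, (‖ψ t‖₊ : ℝ≥0∞) ^ 2)
    ∂(waveletMeasure m)

/-!
For fixed `a > 0` and `b`, the transform `T_ψ(1_T f)(a, b)` is `a^{-m/2}` times the integral over
`T` of `f` against `x ↦ conj ψ((x - b)/a)`. Cauchy–Schwarz bounds its square by
`‖1_T f‖² · ∫_T |ψ((x - b)/a)|² dx`, and the affine change of variables `t = (x - b)/a` turns the
last integral into `a^m ∫_{(T - b)/a} |ψ|²`, whose factor `a^m` cancels the normalisation `a^{-m}`.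
Integrating this pointwise bound over `Ω` against `μ` gives the inequality.
-/

open Module

section
variable {α R : Type*} [MeasurableSpace α] {μ : Measure α} [NormedRing R] [NormedSpace ℝ R]

theorem enorm_integral_mul_le_eLpNorm_mul_eLpNorm {u v : α → R}
    (hu : AEStronglyMeasurable u μ) (hv : AEStronglyMeasurable v μ) :
    ‖∫ x, u x * v x ∂μ‖ₑ ≤ eLpNorm u 2 μ * eLpNorm v 2 μ := by
  calc ‖∫ x, u x * v x ∂μ‖ₑ ≤ eLpNorm (fun x => u x * v x) 1 μ := by
        rw [eLpNorm_one_eq_lintegral_enorm]; exact enorm_integral_le_lintegral_enorm _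
    _ ≤ eLpNorm u 2 μ * eLpNorm v 2 μ := by
        simpa using eLpNorm_le_eLpNorm_mul_eLpNorm_of_nnnorm hu hv (· * ·) 1
          (.of_forall fun x => by simpa using nnnorm_mul_le (u x) (v x))

theorem eLpNorm_two_sq_eq_lintegral {ε : Type*} [ENorm ε] (f : α → ε) :
    eLpNorm f 2 μ ^ 2 = ∫⁻ x, ‖f x‖ₑ ^ 2 ∂μ := by
  simpa using eLpNorm_nnreal_pow_eq_lintegral (f := f) (μ := μ) (p := 2) two_ne_zero
end

section
variable {E : Type*} [NormedAddCommGroup E] [NormedSpace ℝ E] [MeasurableSpace E] [BorelSpace E]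
  {a : ℝ}

noncomputable def MeasurableEquiv.affineRescale (ha : a ≠ 0) (b : E) : E ≃ᵐ E :=
  (MeasurableEquiv.subRight b).trans (MeasurableEquiv.smul₀ a⁻¹ (inv_ne_zero ha))

@[simp]
theorem MeasurableEquiv.coe_affineRescale (ha : a ≠ 0) (b : E) :
    ⇑(MeasurableEquiv.affineRescale ha b) = fun x => a⁻¹ • (x - b) := rfl

variable [FiniteDimensional ℝ E] (μ : Measure E) [μ.IsAddHaarMeasure]

theorem map_affineRescale (ha : a ≠ 0) (b : E) :
    μ.map (MeasurableEquiv.affineRescale ha b) = ENNReal.ofReal (|a| ^ finrank ℝ E) • μ := by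
  have hcomp : ⇑(MeasurableEquiv.affineRescale ha b) = (a⁻¹ • ·) ∘ (· - b) := rfl
  rw [hcomp, ← Measure.map_map (by fun_prop) (by fun_prop), map_sub_right_eq_self,
    Measure.map_addHaar_smul μ (inv_ne_zero ha), inv_pow, inv_inv, abs_pow]

theorem setLIntegral_comp_affineRescale (ha : a ≠ 0) (b : E) (g : E → ℝ≥0∞) (T : Set E) :
    ∫⁻ x in T, g (a⁻¹ • (x - b)) ∂μ =
      ENNReal.ofReal (|a| ^ finrank ℝ E) * ∫⁻ t in (fun x => a⁻¹ • (x - b)) '' T, g t ∂μ := by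
  set e := MeasurableEquiv.affineRescale ha b
  have he : e ⁻¹' (e '' T) = T := e.injective.preimage_image T
  rw [← smul_eq_mul, ← lintegral_smul_measure, ← Measure.restrict_smul,
    ← map_affineRescale μ ha b, ← MeasurableEquiv.coe_affineRescale ha b, e.restrict_map, he,
    lintegral_map_equiv]
  rfl

theorem quasiMeasurePreserving_affineRescale (ha : a ≠ 0) (b : E) :
    Measure.QuasiMeasurePreserving (fun x => a⁻¹ • (x - b)) μ μ where
  measurable := (MeasurableEquiv.affineRescale ha b).measurable
  absolutelyContinuous := by
    rw [← MeasurableEquiv.coe_affineRescale ha b, map_affineRescale]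
    exact Measure.smul_absolutelyContinuous
end

theorem enorm_ofReal_rpow_neg_half_sq {a : ℝ} (ha : 0 < a) (d : ℕ) :
    ‖((a ^ (-(d : ℝ) / 2) : ℝ) : ℂ)‖ₑ ^ 2 = (ENNReal.ofReal (a ^ d))⁻¹ := by
  rw [← ofReal_norm, Complex.norm_real, Real.norm_of_nonneg (by positivity),
    ← ENNReal.ofReal_pow (by positivity), ← Real.rpow_natCast _ 2, ← Real.rpow_mul ha.le,
    ← ENNReal.ofReal_inv_of_pos (by positivity),
    ← Real.rpow_natCast, ← Real.rpow_neg ha.le]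
  norm_num

theorem enorm_waveletTransform_indicator_sq_le {m : ℕ} {ψ f : EuclideanSpace ℝ (Fin m) → ℂ}
    (hψ : AEStronglyMeasurable ψ) (hf : AEStronglyMeasurable f)
    {T : Set (EuclideanSpace ℝ (Fin m))} (hT : MeasurableSet T) {a : ℝ} (ha : 0 < a)
    (b : EuclideanSpace ℝ (Fin m)) :
    ‖waveletTransform m ψ (T.indicator f) (a, b)‖ₑ ^ 2 ≤
      eLpNorm (T.indicator f) 2 volume ^ 2 *
        ∫⁻ t in (fun x => a⁻¹ • (x - b)) '' T, ‖ψ t‖ₑ ^ 2 := by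
  set φ : EuclideanSpace ℝ (Fin m) → ℂ := fun x => starRingEnd ℂ (ψ (a⁻¹ • (x - b)))
  have hφ : AEStronglyMeasurable φ (volume.restrict T) :=
    (hψ.comp_quasiMeasurePreserving
      (quasiMeasurePreserving_affineRescale volume ha.ne' b)).star.restrict
  have hφ_sq : eLpNorm φ 2 (volume.restrict T) ^ 2 =
      ENNReal.ofReal (a ^ m) * ∫⁻ t in (fun x => a⁻¹ • (x - b)) '' T, ‖ψ t‖ₑ ^ 2 := by
    rw [eLpNorm_two_sq_eq_lintegral]
    simpa [φ, abs_of_pos ha] using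
      setLIntegral_comp_affineRescale volume ha.ne' b (fun t => ‖ψ t‖ₑ ^ 2) T
  have hcs : ‖∫ x, T.indicator f x * φ x‖ₑ ^ 2 ≤
      eLpNorm (T.indicator f) 2 volume ^ 2 * eLpNorm φ 2 (volume.restrict T) ^ 2 := by
    simp_rw [← indicator_mul_left]
    rw [integral_indicator hT, eLpNorm_indicator_eq_eLpNorm_restrict hT, ← mul_pow]
    gcongr
    exact enorm_integral_mul_le_eLpNorm_mul_eLpNorm hf.restrict hφ
  have hpos : ENNReal.ofReal (a ^ m) ≠ 0 := by positivity
  calc ‖waveletTransform m ψ (T.indicator f) (a, b)‖ₑ ^ 2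
      = ‖((a ^ (-(m : ℝ) / 2) : ℝ) : ℂ)‖ₑ ^ 2 * ‖∫ x, T.indicator f x * φ x‖ₑ ^ 2 := by
        rw [waveletTransform, enorm_mul, mul_pow]
    _ ≤ (ENNReal.ofReal (a ^ m))⁻¹ * (eLpNorm (T.indicator f) 2 volume ^ 2 *
          (ENNReal.ofReal (a ^ m) * ∫⁻ t in (fun x => a⁻¹ • (x - b)) '' T, ‖ψ t‖ₑ ^ 2)) := by
        rw [enorm_ofReal_rpow_neg_half_sq ha, ← hφ_sq]
        gcongr
    _ = _ := by
        rw [mul_left_comm, ENNReal.inv_mul_cancel_left hpos ENNReal.ofReal_ne_top]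

theorem eLpNorm_localized_waveletTransform_sq_le_general
    (m : ℕ)
    (ψ f : EuclideanSpace ℝ (Fin m) → ℂ)
    (hψ : MemLp ψ 2 (volume : Measure (EuclideanSpace ℝ (Fin m))))
    (hf : MemLp f 2 (volume : Measure (EuclideanSpace ℝ (Fin m))))
    (T : Set (EuclideanSpace ℝ (Fin m))) (hT : MeasurableSet T)
    (Ω : Set (ℝ × EuclideanSpace ℝ (Fin m))) (hΩ : MeasurableSet Ω)
    (hΩ_sub : Ω ⊆ Set.Ioi (0 : ℝ) ×ˢ Set.univ) :
    (eLpNorm (Ω.indicator (waveletTransform m ψ (T.indicator f))) 2 (waveletMeasure m)) ^ 2 ≤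
      (eLpNorm (T.indicator f) 2 (volume : Measure (EuclideanSpace ℝ (Fin m)))) ^ 2 *
        phiOmegaT m ψ Ω T := by
  have hfT : eLpNorm (T.indicator f) 2 volume ^ 2 ≠ ∞ :=
    ENNReal.pow_ne_top (hf.indicator hT).eLpNorm_lt_top.ne
  rw [eLpNorm_indicator_eq_eLpNorm_restrict hΩ, eLpNorm_two_sq_eq_lintegral, phiOmegaT,
    ← lintegral_const_mul' _ _ hfT]
  exact setLIntegral_mono' hΩ fun p hp =>
    enorm_waveletTransform_indicator_sq_le hψ.1 hf.1 hT (hΩ_sub hp).1 p.2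

/-- Localization bound: `‖1_Ω · T_ψ(1_T·f)‖²_{L²(μ)} ≤ ‖1_T·f‖²_{L²} · φ_{Ω,T}(ψ)`. -/
theorem eLpNorm_localized_waveletTransform_sq_le
    (m : ℕ) (hm : 1 ≤ m)
    (ψ f : EuclideanSpace ℝ (Fin m) → ℂ)
    (hψ : MemLp ψ 2 (volume : Measure (EuclideanSpace ℝ (Fin m))))
    (hf : MemLp f 2 (volume : Measure (EuclideanSpace ℝ (Fin m))))
    (T : Set (EuclideanSpace ℝ (Fin m))) (hT : MeasurableSet T)
    (Ω : Set (ℝ × EuclideanSpace ℝ (Fin m))) (hΩ : MeasurableSet Ω)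
    (hΩ_sub : Ω ⊆ Set.Ioi (0 : ℝ) ×ˢ Set.univ) :
    (eLpNorm (Ω.indicator (waveletTransform m ψ (T.indicator f))) 2 (waveletMeasure m)) ^ 2 ≤
      (eLpNorm (T.indicator f) 2 (volume : Measure (EuclideanSpace ℝ (Fin m)))) ^ 2 *
        phiOmegaT m ψ Ω T :=
  eLpNorm_localized_waveletTransform_sq_le_general m ψ f hψ hf T hT Ω hΩ hΩ_sub
end

section
/- Let m ≥ 1, ψ ∈ L²(ℝ^m, ℂ), f ∈ L²(ℝ^m, ℂ), T ⊆ ℝ^m measurable, α > 0, and let Ω = [α, ∞) × Ω̃ where Ω̃ ⊆ ℝ^m has finite Lebesgue measure. Then ‖1_Ω · T_ψ(1_T·f)‖_{L²(μ)} ≤ ‖1_T·f‖_{L²(ℝ^m)} · ‖ψ‖_{L²(ℝ^m)} · (|Ω̃| / (m α^m))^{1/2}, where |Ω̃| is the Lebesgue measure of Ω̃. -/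
open MeasureTheory Set
open scoped ENNReal

/-!
For `a > 0`, Cauchy–Schwarz together with the substitution `x ↦ a⁻¹ • (x - b)`, whose Jacobian
`a^m` contributes exactly the factor `a^{m/2}` to the `L²` norm that the normalisation
`a^{-m/2}` removes, bounds `T_ψ g` uniformly by `‖g‖₂ ‖ψ‖₂` on `{a > 0}`. Hence the `L²(μ)` norm
of `1_Ω · T_ψ g` is at most `‖g‖₂ ‖ψ‖₂ μ(Ω)^{1/2}`, and
`μ(Ω) = |Ω̃| ∫_α^∞ a^{-(m+1)} da = |Ω̃| / (m α^m)`.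
-/

open Module

theorem eLpNorm_indicator_le_of_forall_enorm_le {α ε : Type*} [MeasurableSpace α]
    {μ : Measure α} [TopologicalSpace ε] [ESeminormedAddMonoid ε] {s : Set α} {f : α → ε}
    {C : ℝ≥0∞} (hf : ∀ x ∈ s, ‖f x‖ₑ ≤ C) (p : ℝ≥0∞) :
    eLpNorm (s.indicator f) p μ ≤ C * μ s ^ (1 / p.toReal) := by
  refine (eLpNorm_mono_enorm fun x => ?_).trans (eLpNorm_indicator_const_le C p)
  by_cases hx : x ∈ s <;> simp [hx, hf]

theorem enorm_integral_mul_conj_le {α 𝕜 : Type*} [MeasurableSpace α] {μ : Measure α} [RCLike 𝕜]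
    {f g : α → 𝕜} (hf : AEStronglyMeasurable f μ) (hg : AEStronglyMeasurable g μ) :
    ‖∫ x, f x * starRingEnd 𝕜 (g x) ∂μ‖ₑ ≤ eLpNorm f 2 μ * eLpNorm g 2 μ :=
  calc ‖∫ x, f x * starRingEnd 𝕜 (g x) ∂μ‖ₑ
      ≤ eLpNorm (f • fun x => starRingEnd 𝕜 (g x)) 1 μ := by
        rw [eLpNorm_one_eq_lintegral_enorm]
        exact enorm_integral_le_lintegral_enorm _
    _ ≤ eLpNorm f 2 μ * eLpNorm (fun x => starRingEnd 𝕜 (g x)) 2 μ :=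
        eLpNorm_smul_le_mul_eLpNorm hg.star hf
    _ = eLpNorm f 2 μ * eLpNorm g 2 μ := by
        rw [eLpNorm_congr_enorm_ae (.of_forall fun x => RCLike.enorm_conj (g x))]

section Affine

variable {E : Type*} [NormedAddCommGroup E] [NormedSpace ℝ E] [FiniteDimensional ℝ E]
  [MeasurableSpace E] [BorelSpace E] (μ : Measure E) [μ.IsAddHaarMeasure] {a : ℝ}

theorem map_smul_sub_addHaar (ha : 0 < a) (b : E) :
    Measure.map (fun x => a⁻¹ • (x - b)) μ = ENNReal.ofReal (a ^ finrank ℝ E) • μ := by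
  rw [← Function.comp_def (a⁻¹ • ·) (· - b),
    ← Measure.map_map (measurable_const_smul _) (measurable_sub_const b),
    (measurePreserving_sub_right μ b).map_eq, Measure.map_addHaar_smul μ (inv_ne_zero ha.ne'),
    inv_pow, inv_inv, abs_of_pos (by positivity)]

theorem quasiMeasurePreserving_smul_sub (ha : 0 < a) (b : E) :
    Measure.QuasiMeasurePreserving (fun x => a⁻¹ • (x - b)) μ μ :=
  ⟨(measurable_const_smul _).comp (measurable_sub_const b),
    (map_smul_sub_addHaar μ ha b).symm ▸ Measure.smul_absolutelyContinuous⟩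

theorem eLpNorm_comp_smul_sub {F : Type*} [NormedAddCommGroup F] {ψ : E → F}
    (hψ : AEStronglyMeasurable ψ μ) (ha : 0 < a) (b : E) {p : ℝ≥0∞} (hp : p ≠ ∞) :
    eLpNorm (fun x => ψ (a⁻¹ • (x - b))) p μ =
      ENNReal.ofReal (a ^ finrank ℝ E) ^ (1 / p).toReal * eLpNorm ψ p μ := by
  have hψ' : AEStronglyMeasurable ψ (Measure.map (fun x => a⁻¹ • (x - b)) μ) := by
    rw [map_smul_sub_addHaar μ ha]
    exact hψ.smul_measure _
  rw [← Function.comp_def ψ,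
    ← eLpNorm_map_measure hψ' (quasiMeasurePreserving_smul_sub μ ha b).aemeasurable,
    map_smul_sub_addHaar μ ha, eLpNorm_smul_measure_of_ne_top hp, smul_eq_mul]

end Affine

theorem lintegral_Ici_ofReal_rpow_neg_add_one {s α : ℝ} (hs : 0 < s) (hα : 0 < α) :
    ∫⁻ a in Ici α, ENNReal.ofReal (a ^ (-(s + 1))) = (ENNReal.ofReal (s * α ^ s))⁻¹ := by
  have hlt : -(s + 1) < -1 := by linarith
  rw [← Measure.restrict_congr_set Ioi_ae_eq_Ici, ← ofReal_integral_eq_lintegral_ofReal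
    (integrableOn_Ioi_rpow_of_lt hlt hα), integral_Ioi_rpow_of_lt hlt hα,
    ← ENNReal.ofReal_inv_of_pos (by positivity)]
  · rw [show -(s + 1) + 1 = -s by ring, Real.rpow_neg hα.le, mul_inv]
    field_simp
  · filter_upwards [ae_restrict_mem measurableSet_Ioi] with a ha
    exact Real.rpow_nonneg (hα.trans ha).le _

theorem waveletMeasure_Ici_prod {m : ℕ} (hm : 0 < m) {α : ℝ} (hα : 0 < α)
    (Ω : Set (EuclideanSpace ℝ (Fin m))) :
    waveletMeasure m (Ici α ×ˢ Ω) = volume Ω / ENNReal.ofReal (m * α ^ m) := by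
  rw [waveletMeasure, Measure.prod_prod, withDensity_apply _ measurableSet_Ici,
    Measure.restrict_restrict measurableSet_Ici,
    (inter_eq_left.mpr fun a ha => hα.trans_le ha : Ici α ∩ Ioi 0 = Ici α),
    lintegral_Ici_ofReal_rpow_neg_add_one (Nat.cast_pos.mpr hm) hα, Real.rpow_natCast,
    div_eq_mul_inv, mul_comm]

theorem enorm_waveletTransform_le {m : ℕ} {ψ g : EuclideanSpace ℝ (Fin m) → ℂ}
    (hψ : AEStronglyMeasurable ψ volume) (hg : AEStronglyMeasurable g volume)
    {a : ℝ} (ha : 0 < a) (b : EuclideanSpace ℝ (Fin m)) :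
    ‖waveletTransform m ψ g (a, b)‖ₑ ≤ eLpNorm g 2 volume * eLpNorm ψ 2 volume := by
  have hψab : AEStronglyMeasurable (fun x => ψ (a⁻¹ • (x - b))) volume :=
    hψ.comp_quasiMeasurePreserving (quasiMeasurePreserving_smul_sub volume ha b)
  have hscale : a ^ (-(m : ℝ) / 2) * (a ^ m) ^ (1 / 2 : ℝ) = 1 := by
    rw [← Real.rpow_natCast, ← Real.rpow_mul ha.le, ← Real.rpow_add ha]
    ring_nf
    exact Real.rpow_zero a
  calc ‖waveletTransform m ψ g (a, b)‖ₑ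
      = ENNReal.ofReal (a ^ (-(m : ℝ) / 2)) * ‖∫ x, g x * starRingEnd ℂ (ψ (a⁻¹ • (x - b)))‖ₑ := by
        rw [waveletTransform, enorm_mul, ← ofReal_norm, Complex.norm_real,
          Real.norm_of_nonneg (by positivity)]
    _ ≤ ENNReal.ofReal (a ^ (-(m : ℝ) / 2)) *
          (eLpNorm g 2 volume * eLpNorm (fun x => ψ (a⁻¹ • (x - b))) 2 volume) := by
        gcongr
        exact enorm_integral_mul_conj_le hg hψab
    _ = ENNReal.ofReal (a ^ (-(m : ℝ) / 2)) * ENNReal.ofReal (a ^ m) ^ (1 / 2 : ℝ) *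
          (eLpNorm g 2 volume * eLpNorm ψ 2 volume) := by
        rw [eLpNorm_comp_smul_sub volume hψ ha b ENNReal.ofNat_ne_top, finrank_euclideanSpace_fin,
          ENNReal.toReal_div, ENNReal.toReal_one, ENNReal.toReal_ofNat]
        ring
    _ = eLpNorm g 2 volume * eLpNorm ψ 2 volume := by
        rw [ENNReal.ofReal_rpow_of_nonneg (by positivity) (by norm_num),
          ← ENNReal.ofReal_mul (by positivity), hscale, ENNReal.ofReal_one, one_mul]

theorem eLpNorm_band_localized_waveletTransform_le_general
    (m : ℕ) (hm : 1 ≤ m)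
    (ψ f : EuclideanSpace ℝ (Fin m) → ℂ)
    (hψ : MemLp ψ 2 (volume : Measure (EuclideanSpace ℝ (Fin m))))
    (hf : MemLp f 2 (volume : Measure (EuclideanSpace ℝ (Fin m))))
    (T : Set (EuclideanSpace ℝ (Fin m))) (hT : MeasurableSet T)
    (α : ℝ) (hα : 0 < α)
    (Ωt : Set (EuclideanSpace ℝ (Fin m))) :
    eLpNorm ((Set.Ici α ×ˢ Ωt).indicator (waveletTransform m ψ (T.indicator f))) 2
        (waveletMeasure m) ≤
      eLpNorm (T.indicator f) 2 (volume : Measure (EuclideanSpace ℝ (Fin m))) *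
        eLpNorm ψ 2 (volume : Measure (EuclideanSpace ℝ (Fin m))) *
          (volume Ωt / ENNReal.ofReal (m * α ^ m)) ^ (1 / 2 : ℝ) := by
  have hbound : ∀ p ∈ Ici α ×ˢ Ωt, ‖waveletTransform m ψ (T.indicator f) p‖ₑ ≤
      eLpNorm (T.indicator f) 2 volume * eLpNorm ψ 2 volume := fun p hp =>
    enorm_waveletTransform_le hψ.1 (hf.1.indicator hT) (hα.trans_le hp.1) p.2
  calc _ ≤ _ := eLpNorm_indicator_le_of_forall_enorm_le hbound 2
    _ = _ := by rw [waveletMeasure_Ici_prod hm hα, ENNReal.toReal_ofNat]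

/-- Band-limiting bound: for `Ω = [α,∞) × Ω̃` with `Ω̃` of finite Lebesgue measure,
`‖1_Ω · T_ψ(1_T·f)‖_{L²(μ)} ≤ ‖1_T·f‖_{L²} · ‖ψ‖_{L²} · (|Ω̃| / (m α^m))^{1/2}`. -/
theorem eLpNorm_band_localized_waveletTransform_le
    (m : ℕ) (hm : 1 ≤ m)
    (ψ f : EuclideanSpace ℝ (Fin m) → ℂ)
    (hψ : MemLp ψ 2 (volume : Measure (EuclideanSpace ℝ (Fin m))))
    (hf : MemLp f 2 (volume : Measure (EuclideanSpace ℝ (Fin m))))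
    (T : Set (EuclideanSpace ℝ (Fin m))) (hT : MeasurableSet T)
    (α : ℝ) (hα : 0 < α)
    (Ωt : Set (EuclideanSpace ℝ (Fin m))) (hΩt : MeasurableSet Ωt)
    (hΩt_fin : volume Ωt < ∞) :
    eLpNorm ((Set.Ici α ×ˢ Ωt).indicator (waveletTransform m ψ (T.indicator f))) 2
        (waveletMeasure m) ≤
      eLpNorm (T.indicator f) 2 (volume : Measure (EuclideanSpace ℝ (Fin m))) *
        eLpNorm ψ 2 (volume : Measure (EuclideanSpace ℝ (Fin m))) *
          (volume Ωt / ENNReal.ofReal (m * α ^ m)) ^ (1 / 2 : ℝ) :=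
  eLpNorm_band_localized_waveletTransform_le_general m hm ψ f hψ hf T hT α hα Ωt
end

section
/- Let m ≥ 1, ψ ∈ L²(ℝ^m, ℂ), f ∈ L²(ℝ^m, ℂ) with f ≠ 0 (in L²), T ⊆ ℝ^m and Ω ⊆ (0,∞)×ℝ^m measurable. Assume the Parseval identity ‖T_ψ(g)‖_{L²(μ)} = A_ψ · ‖g‖_{L²(ℝ^m)} holds for every g ∈ L²(ℝ^m, ℂ), where A_ψ > 0 is a constant. If f vanishes almost everywhere outside T and T_ψ(f) vanishes μ-almost everywhere outside Ω, then A_ψ ≤ φ_{Ω,T}(ψ)^{1/2}, where φ_{Ω,T}(ψ) = ∫_Ω (∫_{(T−b)/a} |ψ(t)|² dt) dμ(a,b). -/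
open MeasureTheory Set
open scoped ENNReal

/-!
For `a > 0`, Cauchy–Schwarz on `T`, where `f` lives, followed by the substitution
`t = (x - b) / a` gives `|T_ψ f (a, b)|² ≤ ‖f‖₂² ∫_{(T-b)/a} |ψ|²`: the normalisation `a^(-m/2)`
is exactly compensated by the Jacobian `a^m`. Integrating over `Ω`, where `T_ψ f` lives, yields
`‖T_ψ f‖²_{L²(μ)} ≤ ‖f‖₂² φ_{Ω,T}(ψ)`, and by the Parseval identity the left side is
`A_ψ² ‖f‖₂²`; divide by `‖f‖₂² ≠ 0`.
-/

theorem eLpNorm_eq_eLpNorm_restrict_of_ae_notMem {α F : Type*} [MeasurableSpace α]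
    [NormedAddCommGroup F] {μ : Measure α} {s : Set α} (hs : MeasurableSet s) {g : α → F}
    (p : ℝ≥0∞) (hg : ∀ᵐ x ∂μ, x ∉ s → g x = 0) :
    eLpNorm g p μ = eLpNorm g p (μ.restrict s) := by
  rw [← eLpNorm_indicator_eq_eLpNorm_restrict hs]
  refine eLpNorm_congr_ae ?_
  filter_upwards [hg] with x hx
  by_cases hxs : x ∈ s <;> simp [hxs, hx]

theorem eLpNorm_two_sq {α F : Type*} [MeasurableSpace α] [NormedAddCommGroup F] (μ : Measure α)
    (g : α → F) : eLpNorm g 2 μ ^ 2 = ∫⁻ x, ‖g x‖ₑ ^ 2 ∂μ := by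
  simpa [ENNReal.rpow_two] using eLpNorm_nnreal_pow_eq_lintegral (f := g) (μ := μ) (p := 2)
    two_ne_zero

section ChangeOfVariables

variable {E : Type*} [NormedAddCommGroup E] [NormedSpace ℝ E] [FiniteDimensional ℝ E]
  [MeasurableSpace E] [BorelSpace E] (μ : Measure E) [μ.IsAddHaarMeasure]

theorem setLIntegral_comp_inv_smul_sub {s : Set E} (hs : MeasurableSet s) {a : ℝ} (ha : a ≠ 0)
    (b : E) (g : E → ℝ≥0∞) :
    ∫⁻ x in s, g (a⁻¹ • (x - b)) ∂μ =
      ENNReal.ofReal (|a| ^ Module.finrank ℝ E) *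
        ∫⁻ t in (fun x => a⁻¹ • (x - b)) '' s, g t ∂μ := by
  have hinj : Function.Injective fun x : E => a⁻¹ • (x - b) := fun x y hxy => by
    simpa using smul_right_injective E (inv_ne_zero ha) hxy
  have hderiv : ∀ x ∈ s, HasFDerivWithinAt (fun x : E => a⁻¹ • (x - b))
      (a⁻¹ • ContinuousLinearMap.id ℝ E) s x :=
    fun x _ => (((hasFDerivAt_id x).sub_const b).const_smul a⁻¹).hasFDerivWithinAt
  rw [lintegral_image_eq_lintegral_abs_det_fderiv_mul μ hs hderiv hinj.injOn,
    lintegral_const_mul' _ _ ENNReal.ofReal_ne_top, ← mul_assoc,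
    ← ENNReal.ofReal_mul (by positivity)]
  simp [ContinuousLinearMap.det, LinearMap.det_smul, ha]

end ChangeOfVariables

section WaveletTransform

variable {m : ℕ} {ψ f : EuclideanSpace ℝ (Fin m) → ℂ} {T : Set (EuclideanSpace ℝ (Fin m))}

theorem enorm_waveletTransform_le_s8 (hψ : AEStronglyMeasurable ψ) (hf : AEStronglyMeasurable f)
    (hT : MeasurableSet T) (hsuppT : ∀ᵐ x, x ∉ T → f x = 0) {a : ℝ} (ha : 0 < a)
    (b : EuclideanSpace ℝ (Fin m)) :
    ‖waveletTransform m ψ f (a, b)‖ₑ ≤ ENNReal.ofReal (a ^ (-(m : ℝ) / 2)) *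
      (eLpNorm f 2 volume * eLpNorm (fun x => ψ (a⁻¹ • (x - b))) 2 (volume.restrict T)) := by
  set φ := fun x : EuclideanSpace ℝ (Fin m) => a⁻¹ • (x - b)
  have hψφ : AEStronglyMeasurable (ψ ∘ φ) :=
    hψ.comp_quasiMeasurePreserving <|
      (Measure.quasiMeasurePreserving_smul volume (inv_ne_zero ha.ne')).comp
        (measurePreserving_sub_right volume b).quasiMeasurePreserving
  rw [waveletTransform, enorm_mul, ← ofReal_norm, Complex.norm_real,
    Real.norm_of_nonneg (by positivity)]
  gcongr
  calc ‖∫ x, f x * (starRingEnd ℂ) (ψ (φ x))‖ₑ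
      ≤ eLpNorm (fun x => f x * (starRingEnd ℂ) (ψ (φ x))) 1 volume :=
        (enorm_integral_le_lintegral_enorm _).trans_eq eLpNorm_one_eq_lintegral_enorm.symm
    _ = eLpNorm (fun x => f x * (starRingEnd ℂ) (ψ (φ x))) 1 (volume.restrict T) :=
        eLpNorm_eq_eLpNorm_restrict_of_ae_notMem hT 1 <|
          hsuppT.mono fun x hx hxT => by simp [hx hxT]
    _ ≤ 1 * eLpNorm f 2 (volume.restrict T) * eLpNorm (ψ ∘ φ) 2 (volume.restrict T) :=
        eLpNorm_le_eLpNorm_mul_eLpNorm_of_nnnorm hf.restrict hψφ.restrict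
          (fun u v => u * (starRingEnd ℂ) v) 1 (.of_forall fun x => by simp)
    _ ≤ eLpNorm f 2 volume * eLpNorm (ψ ∘ φ) 2 (volume.restrict T) := by
        rw [one_mul]
        gcongr
        exact Measure.restrict_le_self

theorem enorm_waveletTransform_sq_le (hψ : AEStronglyMeasurable ψ) (hf : AEStronglyMeasurable f)
    (hT : MeasurableSet T) (hsuppT : ∀ᵐ x, x ∉ T → f x = 0) {a : ℝ} (ha : 0 < a)
    (b : EuclideanSpace ℝ (Fin m)) :
    ‖waveletTransform m ψ f (a, b)‖ₑ ^ 2 ≤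
      eLpNorm f 2 volume ^ 2 * ∫⁻ t in (fun x => a⁻¹ • (x - b)) '' T, ‖ψ t‖ₑ ^ 2 := by
  have hscale : ENNReal.ofReal (a ^ (-(m : ℝ) / 2)) ^ 2 * ENNReal.ofReal (|a| ^ m) = 1 := by
    rw [← ENNReal.ofReal_pow (by positivity), ← ENNReal.ofReal_mul (by positivity),
      abs_of_pos ha, ← Real.rpow_natCast, ← Real.rpow_natCast, ← Real.rpow_mul ha.le,
      ← Real.rpow_add ha]
    norm_num
  calc ‖waveletTransform m ψ f (a, b)‖ₑ ^ 2
      ≤ (ENNReal.ofReal (a ^ (-(m : ℝ) / 2)) * (eLpNorm f 2 volume *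
          eLpNorm (fun x => ψ (a⁻¹ • (x - b))) 2 (volume.restrict T))) ^ 2 := by
        gcongr
        exact enorm_waveletTransform_le_s8 hψ hf hT hsuppT ha b
    _ = ENNReal.ofReal (a ^ (-(m : ℝ) / 2)) ^ 2 * ENNReal.ofReal (|a| ^ m) *
          (eLpNorm f 2 volume ^ 2 * ∫⁻ t in (fun x => a⁻¹ • (x - b)) '' T, ‖ψ t‖ₑ ^ 2) := by
        rw [mul_pow, mul_pow, eLpNorm_two_sq (volume.restrict T),
          setLIntegral_comp_inv_smul_sub volume hT ha.ne' b fun t => ‖ψ t‖ₑ ^ 2,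
          finrank_euclideanSpace_fin]
        ring
    _ = eLpNorm f 2 volume ^ 2 * ∫⁻ t in (fun x => a⁻¹ • (x - b)) '' T, ‖ψ t‖ₑ ^ 2 := by
        rw [hscale, one_mul]

theorem eLpNorm_waveletTransform_sq_le_phiOmegaT (hψ : AEStronglyMeasurable ψ)
    (hf : MemLp f 2) (hT : MeasurableSet T) (hsuppT : ∀ᵐ x, x ∉ T → f x = 0)
    {Ω : Set (ℝ × EuclideanSpace ℝ (Fin m))} (hΩ : MeasurableSet Ω)
    (hΩ_sub : Ω ⊆ Ioi 0 ×ˢ univ)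
    (hsuppΩ : ∀ᵐ p ∂waveletMeasure m, p ∉ Ω → waveletTransform m ψ f p = 0) :
    eLpNorm (waveletTransform m ψ f) 2 (waveletMeasure m) ^ 2 ≤
      eLpNorm f 2 volume ^ 2 * phiOmegaT m ψ Ω T := by
  rw [eLpNorm_eq_eLpNorm_restrict_of_ae_notMem hΩ 2 hsuppΩ, eLpNorm_two_sq, phiOmegaT,
    ← lintegral_const_mul' _ _ (by finiteness [hf.2])]
  refine setLIntegral_mono' hΩ fun p hp => ?_
  exact enorm_waveletTransform_sq_le hψ hf.1 hT hsuppT (hΩ_sub hp).1 p.2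

end WaveletTransform

theorem donoho_stark_waveletTransform_support_general
    (m : ℕ)
    (ψ f : EuclideanSpace ℝ (Fin m) → ℂ)
    (hψ : MemLp ψ 2 (volume : Measure (EuclideanSpace ℝ (Fin m))))
    (hf : MemLp f 2 (volume : Measure (EuclideanSpace ℝ (Fin m))))
    (hf_ne : eLpNorm f 2 (volume : Measure (EuclideanSpace ℝ (Fin m))) ≠ 0)
    (T : Set (EuclideanSpace ℝ (Fin m))) (hT : MeasurableSet T)
    (Ω : Set (ℝ × EuclideanSpace ℝ (Fin m))) (hΩ : MeasurableSet Ω)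
    (hΩ_sub : Ω ⊆ Set.Ioi (0 : ℝ) ×ˢ Set.univ)
    (Aψ : ℝ)
    (hParseval : ∀ g : EuclideanSpace ℝ (Fin m) → ℂ,
      MemLp g 2 (volume : Measure (EuclideanSpace ℝ (Fin m))) →
        eLpNorm (waveletTransform m ψ g) 2 (waveletMeasure m) =
          ENNReal.ofReal Aψ * eLpNorm g 2 (volume : Measure (EuclideanSpace ℝ (Fin m))))
    (hsuppT : ∀ᵐ x ∂(volume : Measure (EuclideanSpace ℝ (Fin m))), x ∉ T → f x = 0)
    (hsuppΩ : ∀ᵐ p ∂(waveletMeasure m), p ∉ Ω → waveletTransform m ψ f p = 0) :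
    ENNReal.ofReal Aψ ≤ (phiOmegaT m ψ Ω T) ^ (1 / 2 : ℝ) := by
  have hbound := eLpNorm_waveletTransform_sq_le_phiOmegaT hψ.1 hf hT hsuppT hΩ hΩ_sub hsuppΩ
  rw [hParseval f hf, mul_pow, mul_comm] at hbound
  rw [one_div, ENNReal.le_rpow_inv_iff two_pos, ENNReal.rpow_two]
  exact (ENNReal.mul_le_mul_iff_right (pow_ne_zero 2 hf_ne) (ENNReal.pow_ne_top hf.2.ne)).1 hbound

/-- If a nonzero `f ∈ L²` is supported in `T` (a.e.) and `T_ψ f` is supported in `Ω`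
(μ-a.e.), then `A_ψ ≤ φ_{Ω,T}(ψ)^{1/2}`. -/
theorem donoho_stark_waveletTransform_support
    (m : ℕ) (hm : 1 ≤ m)
    (ψ f : EuclideanSpace ℝ (Fin m) → ℂ)
    (hψ : MemLp ψ 2 (volume : Measure (EuclideanSpace ℝ (Fin m))))
    (hf : MemLp f 2 (volume : Measure (EuclideanSpace ℝ (Fin m))))
    (hf_ne : eLpNorm f 2 (volume : Measure (EuclideanSpace ℝ (Fin m))) ≠ 0)
    (T : Set (EuclideanSpace ℝ (Fin m))) (hT : MeasurableSet T)
    (Ω : Set (ℝ × EuclideanSpace ℝ (Fin m))) (hΩ : MeasurableSet Ω)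
    (hΩ_sub : Ω ⊆ Set.Ioi (0 : ℝ) ×ˢ Set.univ)
    (Aψ : ℝ) (hAψ : 0 < Aψ)
    (hParseval : ∀ g : EuclideanSpace ℝ (Fin m) → ℂ,
      MemLp g 2 (volume : Measure (EuclideanSpace ℝ (Fin m))) →
        eLpNorm (waveletTransform m ψ g) 2 (waveletMeasure m) =
          ENNReal.ofReal Aψ * eLpNorm g 2 (volume : Measure (EuclideanSpace ℝ (Fin m))))
    (hsuppT : ∀ᵐ x ∂(volume : Measure (EuclideanSpace ℝ (Fin m))), x ∉ T → f x = 0)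
    (hsuppΩ : ∀ᵐ p ∂(waveletMeasure m), p ∉ Ω → waveletTransform m ψ f p = 0) :
    ENNReal.ofReal Aψ ≤ (phiOmegaT m ψ Ω T) ^ (1 / 2 : ℝ) :=
  donoho_stark_waveletTransform_support_general m ψ f hψ hf hf_ne T hT Ω hΩ hΩ_sub Aψ hParseval
    hsuppT hsuppΩ
end
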